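/- Let M be a monotonic mMCS with no negative bridge-rule body literals, and suppose the iterative grounding procedure reaches a fixed point at some finite step δ, i.e., kb_i^{δ+1} = kb_i^δ for all i. Then the belief state S^δ = (ACC'_1(kb_1^δ),...,ACC'_ℓ(kb_ℓ^δ)) is a grounded equilibrium of grade δ, and moreover kb_i^α = kb_i^δ for all α ≥ δ, so S^δ equals the grounded equilibrium of grade ∞. -/
import Mathlib


/-- if the iterative grounding procedure of a monotonic mMCS
(positive bridge-rule bodies only) reaches a fixed point at a finite step δ
(`kb_i^{δ+1} = kb_i^δ` for all i), then `S^δ = (ACC'_1(kb_1^δ),...,ACC'_ℓ(kb_ℓ^δ))`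
is a grounded equilibrium of grade δ, the chain stabilizes (`kb_i^α = kb_i^δ` for
all α ≥ δ), and `S^δ` equals the grounded equilibrium of grade ∞ (equilibrium
condition with `kb_i^∞ = ⋃_α kb_i^α`). -/
theorem fixed_point_grounded_equilibrium
    {ι F : Type*}
    (ACC' : ι → Set F → Set F)
    (mng : ι → Set F → Set F → Set F)
    (app : ι → (ι → Set F) → Set F)
    (kb0 : ι → Set F)
    -- monotonicity assumptions
    (hACC : ∀ i, Monotone (ACC' i))
    (hmngExt : ∀ i H kb, kb ⊆ mng i H kb)
    (hmngMono : ∀ i, Monotone (fun p : Set F × Set F => mng i p.1 p.2))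
    (happ : ∀ i, Monotone (app i))
    -- the iterative grounding procedure
    (kbα : ℕ → ι → Set F)
    (hkb0 : kbα 0 = kb0)
    (Sα : ℕ → ι → Set F)
    (hSα : ∀ α i, Sα α i = ACC' i (kbα α i))
    (hstep : ∀ α i, kbα (α + 1) i = mng i (app i (Sα α)) (kbα α i))
    -- fixed point at finite step δ
    (δ : ℕ) (hfix : ∀ i, kbα (δ + 1) i = kbα δ i) :
    -- S^δ is a grounded equilibrium of grade δ
    (∀ i, ACC' i (mng i (app i (Sα δ)) (kbα δ i)) = Sα δ i) ∧
    -- the chain stabilizes from δ onward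
    (∀ α, δ ≤ α → ∀ i, kbα α i = kbα δ i) ∧
    -- S^δ equals the grounded equilibrium of grade ∞
    (∀ i, ACC' i (mng i (app i (Sα δ)) (⋃ α, kbα α i)) = Sα δ i) := by
  have hstab : ∀ α, δ ≤ α → ∀ i, kbα α i = kbα δ i := by
    intro α hle
    induction α with
    | zero => intro i; have h0 : δ = 0 := Nat.le_zero.mp hle; rw [h0]
    | succ n ih =>
      intro i
      rcases Nat.lt_or_ge δ (n+1) with h | h
      · have hδn : δ ≤ n := Nat.lt_succ_iff.mp h
        have hkb : ∀ j, kbα n j = kbα δ j := ih hδn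
        have hS : Sα n = Sα δ := by
          funext j; rw [hSα, hSα, hkb j]
        rw [hstep, hS, hkb i, ← hstep, hfix]
      · have hδ : δ = n + 1 := le_antisymm hle h
        rw [hδ]
  have hmono : ∀ α i, kbα α i ⊆ kbα (α+1) i := by
    intro α i
    rw [hstep]; exact hmngExt i _ _
  have hchain : ∀ α β, α ≤ β → ∀ i, kbα α i ⊆ kbα β i := by
    intro α β hle i
    induction β with
    | zero => have : α = 0 := Nat.le_zero.mp hle; rw [this]
    | succ n ih =>
      rcases Nat.lt_or_ge α (n+1) with h | h
      · exact (ih (Nat.lt_succ_iff.mp h)).trans (hmono n i)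
      · have : α = n + 1 := le_antisymm hle h
        rw [this]
  have hUnion : ∀ i, (⋃ α, kbα α i) = kbα δ i := by
    intro i
    apply Set.eq_of_subset_of_subset
    · apply Set.iUnion_subset
      intro α
      rcases Nat.le_total α δ with h | h
      · exact hchain α δ h i
      · rw [hstab α h i]
    · exact Set.subset_iUnion (fun α => kbα α i) δ
  have heq : ∀ i, ACC' i (mng i (app i (Sα δ)) (kbα δ i)) = Sα δ i := by
    intro i
    rw [← hstep, hfix, ← hSα]
  exact ⟨heq, hstab, fun i => by rw [hUnion i]; exact heq i⟩
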